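/- arXiv:1409.7790 — 3 statements merged into one kernel-verified Lean document; each statement's English description precedes it below -/
import Mathlib

section
/- Let K be a field, let S ⊆ K be a finite set with |S| ≥ t+1, and let P ∈ K[x_1,...,x_n] be a polynomial in which every variable x_i has individual degree at most t. Then P is the zero polynomial if and only if P(a) = 0 for every point a ∈ S^n. -/
/-- Combinatorial Nullstellensatz (weak form): if every variable has individual
degree at most `t` in `P`, and `S` is a finite set with at least `t+1` elements,
then `P = 0` iff `P` vanishes on `S^n`. -/
theorem combinatorial_nullstellensatz_weak
    {K : Type*} [Field K] {n t : ℕ} (S : Finset K) (hS : t + 1 ≤ S.card)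
    (P : MvPolynomial (Fin n) K) (hdeg : ∀ i : Fin n, MvPolynomial.degreeOf i P ≤ t) :
    P = 0 ↔ ∀ a : Fin n → K, (∀ i, a i ∈ S) → MvPolynomial.eval a P = 0 := by
  refine ⟨fun hP a _ ↦ by rw [hP, map_zero], fun hvanish ↦ ?_⟩
  exact MvPolynomial.eq_zero_of_eval_zero_at_prod_finset P (fun _ ↦ S)
    (fun i ↦ (hdeg i).trans_lt hS) hvanish
end

section
/- Let K be a field, f ∈ K[x_1,...,x_n] a polynomial of total degree at most k, and S ⊆ K a finite set containing 0 with |S| ≥ k+1. If f(a) = 0 for every vector a ∈ S^n having at most k nonzero coordinates, then f is the zero polynomial. -/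
/-!
Let `m` be a monomial of `f` of maximal total degree `deg m ≤ k`. For each variable pick
`T i ⊆ S` with `0 ∈ T i` and `|T i| = m i + 1`. By Alon's Combinatorial Nullstellensatz `f` does
not vanish on the grid `∏ T i`. A grid point can only be nonzero in coordinates where `m i > 0`
(elsewhere `T i = {0}`), so its weight is at most `|supp m| ≤ deg m ≤ k`.
-/

open Finset MvPolynomial

lemma Finset.exists_subset_mem_card_eq_succ {α : Type*} {S : Finset α} {a : α} {c : ℕ}
    (ha : a ∈ S) (hc : c < #S) : ∃ T ⊆ S, a ∈ T ∧ #T = c + 1 := by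
  obtain ⟨T, haT, hTS, hT⟩ :=
    exists_subsuperset_card_eq (singleton_subset_iff.mpr ha) (by simp) (Nat.succ_le_of_lt hc)
  exact ⟨T, hTS, singleton_subset_iff.mp haT, hT⟩

lemma Finsupp.card_support_le_degree {σ : Type*} (m : σ →₀ ℕ) : #m.support ≤ m.degree := by
  rw [Finsupp.degree_apply, card_eq_sum_ones]
  refine Finset.sum_le_sum fun i hi => ?_
  exact Nat.one_le_iff_ne_zero.mpr (Finsupp.mem_support_iff.mp hi)

lemma card_filter_ne_zero_le_degree_of_mem_grid {σ R : Type*} [Fintype σ] [Zero R]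
    [DecidableEq R] {m : σ →₀ ℕ} {T : σ → Finset R} (hT0 : ∀ i, 0 ∈ T i)
    (hTcard : ∀ i, #(T i) = m i + 1) {x : σ → R} (hx : ∀ i, x i ∈ T i) :
    #{i | x i ≠ 0} ≤ m.degree := by
  have hsupp : ({i | x i ≠ 0} : Finset σ) ⊆ m.support := by
    intro i hi
    rw [Finsupp.mem_support_iff]
    intro hmi
    exact (mem_filter.mp hi).2 <|
      card_le_one.mp (by rw [hTcard, hmi]) _ (hx i) _ (hT0 i)
  exact (card_le_card hsupp).trans m.card_support_le_degree

/-- A polynomial of total degree at most `k` vanishing on all points of `S^n`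
of Hamming weight at most `k` (where `0 ∈ S`, `|S| ≥ k+1`) is the zero polynomial. -/
theorem vanishing_on_low_weight_points
    {K : Type*} [Field K] [DecidableEq K] {n k : ℕ} (S : Finset K) (h0 : (0 : K) ∈ S)
    (hS : k + 1 ≤ S.card)
    (f : MvPolynomial (Fin n) K) (hdeg : f.totalDegree ≤ k)
    (hvan : ∀ a : Fin n → K, (∀ i, a i ∈ S) →
      (Finset.univ.filter (fun i => a i ≠ 0)).card ≤ k →
      MvPolynomial.eval a f = 0) :
    f = 0 := by
  by_contra hf
  set m := MonomialOrder.degLex.degree f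
  have hm : m.degree = f.totalDegree := degree_degLexDegree
  have hmk : ∀ i, m i < #S := fun i => by
    have := Finsupp.le_degree i m
    omega
  choose T hTS hT0 hTcard using fun i => exists_subset_mem_card_eq_succ h0 (hmk i)
  obtain ⟨x, hxT, hx⟩ := combinatorial_nullstellensatz_exists_eval_nonzero f m
    (MonomialOrder.degLex.coeff_degree_ne_zero_iff.mpr hf) hm.symm T (by simp [hTcard])
  refine hx (hvan x (fun i => hTS i (hxT i)) ?_)
  exact (card_filter_ne_zero_le_degree_of_mem_grid hT0 hTcard hxT).trans (hm ▸ hdeg)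
end

section
/- Let K be a field with distinct elements a_1,...,a_n, and define the Shpilka–Volkovich generator G_k = (G_k^1,...,G_k^n) where G_k^i(y_1,...,y_k,z_1,...,z_k) = Σ_{j=1}^k L_i(y_j)·z_j and L_i is the Lagrange basis polynomial for the points a_1,...,a_n. Then for every finite set S ⊆ K, every vector in S^n with at most k nonzero coordinates lies in the image { (G_k^1(α),...,G_k^n(α)) : α ∈ (S ∪ {a_1,...,a_n})^{2k} }. -/
/-! Embed the support of `v` (at most `k` indices `t`) into the `k` slots of the generator and put
`y_j = a_t`, `z_j = v_t` in the slot `j` of `t`, and `y_j = z_j = 0` in the remaining slots. Since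
`L_i(a_t) = δ_{it}`, coordinate `i` of the generator is then `v_i`. -/

open Finset Function

section Lagrange

variable {K ι : Type*} [Field K] [Fintype ι] [DecidableEq ι]

theorem Lagrange.eval_basis_univ (a : ι → K) (i : ι) (x : K) :
    (Lagrange.basis univ a i).eval x =
      (∏ l ∈ univ.erase i, (x - a l)) / ∏ l ∈ univ.erase i, (a i - a l) := by
  simp only [Lagrange.basis, Polynomial.eval_prod, Lagrange.basisDivisor, Polynomial.eval_mul,
    Polynomial.eval_C, Polynomial.eval_sub, Polynomial.eval_X, prod_mul_distrib, prod_inv_distrib,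
    div_eq_inv_mul]

variable {a : ι → K}

theorem Lagrange.eval_basis_univ_node (ha : Injective a) (i j : ι) :
    (Lagrange.basis univ a i).eval (a j) = if i = j then 1 else 0 := by
  split_ifs with h
  · exact h ▸ eval_basis_self ha.injOn (mem_univ i)
  · exact eval_basis_of_ne h (mem_univ j)

theorem Lagrange.sum_eval_basis_univ_node_mul (ha : Injective a) (v : ι → K) (i : ι) :
    ∑ l, (Lagrange.basis univ a i).eval (a l) * v l = v i := by
  simp [eval_basis_univ_node ha]

end Lagrange

theorem Function.extend_const_mem {α β γ : Type*} {f : α → β} {g : α → γ} {c : γ} {s : Set γ}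
    (hg : ∀ x, g x ∈ s) (hc : c ∈ s) (b : β) : extend f g (fun _ => c) b ∈ s := by
  classical
  rw [extend_def]
  split_ifs
  exacts [hg _, hc]

theorem Fintype.sum_extend_mul_extend_zero {α β R : Type*} [Fintype α] [Fintype β]
    [NonUnitalNonAssocSemiring R] (e : α ↪ β) (F : R → R) (y z : α → R) (c : R) :
    ∑ j, F (extend e y (fun _ => c) j) * extend e z (fun _ => 0) j = ∑ t, F (y t) * z t := by
  refine (Fintype.sum_of_injective e e.injective _ _ (fun j hj => ?_) fun t => ?_).symm
  · rw [extend_apply' z _ _ (by simpa using hj), mul_zero]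
  · rw [e.injective.extend_apply, e.injective.extend_apply]

theorem Fintype.sum_subtype_ne_zero_mul {ι R : Type*} [Fintype ι] [NonUnitalNonAssocSemiring R]
    (v : ι → R) [DecidablePred fun i => v i ≠ 0] (F : ι → R) :
    ∑ t : {i // v i ≠ 0}, F t * v t = ∑ i, F i * v i := by
  refine Fintype.sum_of_injective Subtype.val Subtype.val_injective _ _ (fun i hi => ?_) fun _ => rfl
  rw [not_not.mp fun h => hi ⟨⟨i, h⟩, rfl⟩, mul_zero]

/-- The image of the Shpilka–Volkovich generator `G_k` on `(S ∪ {a_1,...,a_n})^{2k}`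
contains every vector of `S^n` of Hamming weight at most `k` (with `0 ∈ S`). -/
theorem sv_generator_image_contains_low_weight
    {K : Type*} [Field K] [DecidableEq K] {n k : ℕ} (a : Fin n → K) (ha : Function.Injective a)
    (S : Finset K) (h0 : (0 : K) ∈ S)
    (v : Fin n → K) (hvS : ∀ i, v i ∈ S)
    (hwt : (Finset.univ.filter (fun i => v i ≠ 0)).card ≤ k) :
    ∃ y z : Fin k → K,
      (∀ j, y j ∈ S ∪ Finset.image a Finset.univ) ∧
      (∀ j, z j ∈ S ∪ Finset.image a Finset.univ) ∧
      (∀ i : Fin n,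
        v i = ∑ j : Fin k,
          ((∏ l ∈ Finset.univ.erase i, (y j - a l)) /
            (∏ l ∈ Finset.univ.erase i, (a i - a l))) * z j) := by
  obtain ⟨e⟩ : Nonempty ({i // v i ≠ 0} ↪ Fin k) :=
    Embedding.nonempty_of_card_le (by rwa [Fintype.card_fin, Fintype.card_subtype])
  refine ⟨extend e (fun t => a t) fun _ => 0, extend e (fun t => v t) fun _ => 0,
    extend_const_mem (fun t => mem_union_right _ (mem_image_of_mem a (mem_univ _)))
      (mem_union_left _ h0),
    extend_const_mem (fun t => mem_union_left _ (hvS t)) (mem_union_left _ h0), fun i => ?_⟩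
  simp_rw [← Lagrange.eval_basis_univ]
  rw [Fintype.sum_extend_mul_extend_zero e (Polynomial.eval · (Lagrange.basis univ a i)),
    Fintype.sum_subtype_ne_zero_mul v fun l => (Lagrange.basis univ a i).eval (a l),
    Lagrange.sum_eval_basis_univ_node_mul ha]
end
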